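/- For any finite graph G = (V,E), ν(G) ≤ min_{x∼y} (d_x + d_y)/2 − 1, where the minimum runs over all edges {x,y} ∈ E and d_x denotes the degree of the vertex x. -/

import Mathlib

open Finset

variable {V : Type*} [Fintype V] {W : Type*} [Fintype W]

open scoped Classical in
noncomputable def magEnergy (G : SimpleGraph V) (σ : V → V → ℂ) (f : V → ℂ) : ℝ :=
  (1/2) * ∑ x : V, ∑ y : V, if G.Adj x y then ‖f x - σ x y * f y‖ ^ 2 else 0

noncomputable def magDenom (f : V → ℂ) : ℝ := ∑ x : V, ‖f x‖ ^ 2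

noncomputable def lambda1 (G : SimpleGraph V) (σ : V → V → ℂ) : ℝ :=
  sInf { r : ℝ | ∃ f : V → ℂ, f ≠ 0 ∧ r = magEnergy G σ f / magDenom f }

def IsMagPotential (G : SimpleGraph V) (σ : V → V → ℂ) : Prop :=
  (∀ x y, G.Adj x y → ‖σ x y‖ = 1) ∧
  (∀ x y, G.Adj x y → σ y x = (σ x y)⁻¹)

noncomputable def magHeight (G : SimpleGraph V) : ℝ :=
  sSup { r : ℝ | ∃ σ : V → V → ℂ, IsMagPotential G σ ∧ r = lambda1 G σ }

open scoped Classical in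
noncomputable def magLap (G : SimpleGraph V) (σ : V → V → ℂ) (f : V → ℂ) : V → ℂ :=
  fun x => ∑ y : V, if G.Adj x y then f x - σ x y * f y else 0

/-!
Fix an edge `xy` and a potential `σ`, and test the Rayleigh quotient on the function equal to `1`
at `x`, to `σ(x,y)⁻¹` at `y` and to `0` elsewhere. It is chosen so that the edge `xy` itself
contributes nothing to the energy, whereas each of the other `d_x + d_y - 2` edges at `x` or `y`
contributes exactly `1` because `|σ| = 1`. As its squared norm is `2`, every `λ₁^σ(G)` is at most
`(d_x + d_y) / 2 - 1`.
-/

open scoped ComplexConjugate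

lemma magEnergy_nonneg (G : SimpleGraph V) (σ : V → V → ℂ) (f : V → ℂ) :
    0 ≤ magEnergy G σ f := by
  unfold magEnergy
  refine mul_nonneg (by norm_num) (sum_nonneg fun u _ => sum_nonneg fun v _ => ?_)
  split_ifs <;> positivity

lemma magDenom_nonneg (f : V → ℂ) : 0 ≤ magDenom f :=
  sum_nonneg fun _ _ => by positivity

lemma lambda1_le_of_ne_zero (G : SimpleGraph V) (σ : V → V → ℂ) {f : V → ℂ} (hf : f ≠ 0) :
    lambda1 G σ ≤ magEnergy G σ f / magDenom f :=
  csInf_le ⟨0, by rintro _ ⟨g, -, rfl⟩; exact div_nonneg (magEnergy_nonneg ..) (magDenom_nonneg g)⟩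
    ⟨f, hf, rfl⟩

lemma norm_sub_mul_sq_of_norm_eq_one {s : ℂ} (hs : ‖s‖ = 1) (a b : ℂ) :
    ‖a - s * b‖ ^ 2 = ‖a‖ ^ 2 + ‖b‖ ^ 2 - 2 * (conj a * s * b).re := by
  rw [norm_sub_sq (𝕜 := ℂ), RCLike.inner_apply', norm_mul, hs, one_mul, mul_assoc]
  simp only [RCLike.re_to_complex]
  ring

lemma magEnergy_eq_sum_neighborFinset (G : SimpleGraph V) [DecidableRel G.Adj]
    (σ : V → V → ℂ) (f : V → ℂ) :
    magEnergy G σ f = (1 / 2) * ∑ u, ∑ v ∈ G.neighborFinset u, ‖f u - σ u v * f v‖ ^ 2 := by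
  simp_rw [magEnergy, SimpleGraph.neighborFinset_eq_filter, sum_filter]
  congr!

lemma sum_sum_neighborFinset_eq_sum_degree_mul (G : SimpleGraph V) [DecidableRel G.Adj]
    (g : V → ℝ) : ∑ u, ∑ v ∈ G.neighborFinset u, g v = ∑ u, G.degree u * g u := by
  have hswap : ∑ u, ∑ v ∈ G.neighborFinset u, g v = ∑ u, ∑ v ∈ G.neighborFinset u, g u := by
    simp_rw [SimpleGraph.neighborFinset_eq_filter, sum_filter]
    rw [sum_comm]
    simp_rw [G.adj_comm]
  simp_rw [hswap, sum_const, SimpleGraph.card_neighborFinset_eq_degree, nsmul_eq_mul]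

lemma magEnergy_eq_sum_degree_sub_re (G : SimpleGraph V) [DecidableRel G.Adj]
    {σ : V → V → ℂ} (hσ : ∀ x y, G.Adj x y → ‖σ x y‖ = 1) (f : V → ℂ) :
    magEnergy G σ f = ∑ u, G.degree u * ‖f u‖ ^ 2
      - (∑ u, ∑ v ∈ G.neighborFinset u, conj (f u) * σ u v * f v).re := by
  have hterm : ∀ u, ∀ v ∈ G.neighborFinset u, ‖f u - σ u v * f v‖ ^ 2
      = ‖f u‖ ^ 2 + ‖f v‖ ^ 2 - 2 * (conj (f u) * σ u v * f v).re := fun u v hv =>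
    norm_sub_mul_sq_of_norm_eq_one (hσ u v ((G.mem_neighborFinset u v).1 hv)) _ _
  rw [magEnergy_eq_sum_neighborFinset, sum_congr rfl fun u _ => sum_congr rfl (hterm u)]
  simp only [sum_sub_distrib, sum_add_distrib, ← mul_sum, Complex.re_sum,
    sum_sum_neighborFinset_eq_sum_degree_mul G (fun v => ‖f v‖ ^ 2), sum_const,
    SimpleGraph.card_neighborFinset_eq_degree, nsmul_eq_mul]
  ring

lemma magEnergy_eq_of_eq_zero_off_edge (G : SimpleGraph V) [DecidableRel G.Adj]
    {σ : V → V → ℂ} (hσ : ∀ x y, G.Adj x y → ‖σ x y‖ = 1) {x y : V} (hxy : G.Adj x y)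
    {f : V → ℂ} (hf : ∀ v, v ≠ x → v ≠ y → f v = 0) :
    magEnergy G σ f = G.degree x * ‖f x‖ ^ 2 + G.degree y * ‖f y‖ ^ 2
      - (conj (f x) * σ x y * f y + conj (f y) * σ y x * f x).re := by
  have hne := G.ne_of_adj hxy
  have hnbr : ∀ u, ∀ w ∈ G.neighborFinset u, w ≠ x → w ≠ y →
      conj (f u) * σ u w * f w = 0 := fun u w _ hwx hwy => by simp [hf w hwx hwy]
  have hcross_x : ∑ w ∈ G.neighborFinset x, conj (f x) * σ x w * f w = conj (f x) * σ x y * f y :=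
    sum_eq_single_of_mem y ((G.mem_neighborFinset x y).2 hxy) fun w hw hwy =>
      hnbr x w hw (G.ne_of_adj ((G.mem_neighborFinset x w).1 hw)).symm hwy
  have hcross_y : ∑ w ∈ G.neighborFinset y, conj (f y) * σ y w * f w = conj (f y) * σ y x * f x :=
    sum_eq_single_of_mem x ((G.mem_neighborFinset y x).2 hxy.symm) fun w hw hwx =>
      hnbr y w hw hwx (G.ne_of_adj ((G.mem_neighborFinset y w).1 hw)).symm
  rw [magEnergy_eq_sum_degree_sub_re G hσ, Fintype.sum_eq_add x y hne fun u hu => by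
      simp [hf u hu.1 hu.2], Fintype.sum_eq_add x y hne fun u hu => by
      simp [hf u hu.1 hu.2], hcross_x, hcross_y]

lemma magDenom_eq_of_eq_zero_off_edge {x y : V} (hne : x ≠ y) {f : V → ℂ}
    (hf : ∀ v, v ≠ x → v ≠ y → f v = 0) : magDenom f = ‖f x‖ ^ 2 + ‖f y‖ ^ 2 :=
  Fintype.sum_eq_add x y hne fun u hu => by simp [hf u hu.1 hu.2]

lemma lambda1_le_half_degree_add_sub_one (G : SimpleGraph V) [DecidableRel G.Adj]
    {σ : V → V → ℂ} (hσ : IsMagPotential G σ) {x y : V} (hxy : G.Adj x y) :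
    lambda1 G σ ≤ ((G.degree x : ℝ) + G.degree y) / 2 - 1 := by
  classical
  obtain ⟨hnorm, hinv⟩ := hσ
  have hne := G.ne_of_adj hxy
  have hσxy : ‖σ x y‖ = 1 := hnorm x y hxy
  set f : V → ℂ := Pi.single x 1 + Pi.single y (σ x y)⁻¹
  have hfx : f x = 1 := by simp [f, hne]
  have hfy : f y = (σ x y)⁻¹ := by simp [f, hne.symm]
  have hf : ∀ v, v ≠ x → v ≠ y → f v = 0 := fun v hvx hvy => by simp [f, hvx, hvy]
  have hcross : conj (f x) * σ x y * f y + conj (f y) * σ y x * f x = 2 := by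
    rw [hfx, hfy, hinv x y hxy, Complex.inv_eq_conj hσxy, Complex.conj_conj, map_one, one_mul,
      mul_one, Complex.mul_conj, Complex.normSq_eq_norm_sq, hσxy]
    norm_num
  have hf₀ : f ≠ 0 := fun h => by simpa [hfx] using congrFun h x
  calc lambda1 G σ ≤ magEnergy G σ f / magDenom f := lambda1_le_of_ne_zero G σ hf₀
    _ = ((G.degree x : ℝ) + G.degree y) / 2 - 1 := by
      rw [magEnergy_eq_of_eq_zero_off_edge G hnorm hxy hf, magDenom_eq_of_eq_zero_off_edge hne hf,
        hcross, hfx, hfy]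
      simp only [norm_one, one_pow, mul_one, norm_inv, hσxy, inv_one, Complex.re_ofNat]
      ring

theorem magHeight_le_min_degree_bound (G : SimpleGraph V) [DecidableRel G.Adj]
    (x y : V) (hxy : G.Adj x y) :
    magHeight G ≤ ((G.degree x : ℝ) + G.degree y) / 2 - 1 := by
  refine Real.sSup_le (fun _ ⟨σ, hσ, hr⟩ => hr ▸ lambda1_le_half_degree_add_sub_one G hσ hxy) ?_
  have hx : (1 : ℝ) ≤ G.degree x := by exact_mod_cast (G.degree_pos_iff_exists_adj x).2 ⟨y, hxy⟩
  have hy : (1 : ℝ) ≤ G.degree y := by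
    exact_mod_cast (G.degree_pos_iff_exists_adj y).2 ⟨x, hxy.symm⟩
  linarith
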